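/- Let P : ℝ → [0,∞) be bounded and Lipschitz with Lipschitz constant L, and let φ₁, φ₂, S₁, S₂, μ₁, μ₂ be elements of appropriate L⁴/L² spaces over Ω. Then for μ := μ₁−μ₂, φ := φ₁−φ₂, S := S₁−S₂, the integrand splits as P(φ₁)(S₁−μ₁) − P(φ₂)(S₂−μ₂) = P(φ₁)(S−μ) + (P(φ₁)−P(φ₂))(S₂−μ₂), and consequently ∫_Ω [P(φ₁)(S₁−μ₁) − P(φ₂)(S₂−μ₂)](μ−S) ≤ L ‖φ‖_{L⁴} ‖S₂−μ₂‖_{L⁴} ‖S−μ‖_{L²}, since the first summand contributes ∫_Ω P(φ₁)(S−μ)(μ−S) = −∫_Ω P(φ₁)|S−μ|² ≤ 0. -/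

import Mathlib

open MeasureTheory
open scoped ENNReal

/-- splitting and Hölder estimate for the difference of proliferation
terms, the key estimate in the continuous dependence proof. -/
theorem stmt15 {Ω : Type*} [MeasurableSpace Ω] (ν : Measure Ω) [IsFiniteMeasure ν]
    (P : ℝ → ℝ) (hPnonneg : ∀ s : ℝ, 0 ≤ P s) (CP : ℝ) (hPbdd : ∀ s : ℝ, P s ≤ CP)
    (L : ℝ) (hL : 0 ≤ L) (hPLip : LipschitzWith L.toNNReal P)
    (φ₁ φ₂ S₁ S₂ μ₁ μ₂ : Ω → ℝ)
    (hφ₁ : MemLp φ₁ 4 ν) (hφ₂ : MemLp φ₂ 4 ν)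
    (hS₁ : MemLp S₁ 2 ν) (hμ₁ : MemLp μ₁ 2 ν)
    (hS₂ : MemLp S₂ 4 ν) (hμ₂ : MemLp μ₂ 4 ν) :
    (∀ x : Ω,
      P (φ₁ x) * (S₁ x - μ₁ x) - P (φ₂ x) * (S₂ x - μ₂ x)
        = P (φ₁ x) * ((S₁ x - S₂ x) - (μ₁ x - μ₂ x))
          + (P (φ₁ x) - P (φ₂ x)) * (S₂ x - μ₂ x)) ∧
    (∫ x, P (φ₁ x) * ((S₁ x - S₂ x) - (μ₁ x - μ₂ x))
        * ((μ₁ x - μ₂ x) - (S₁ x - S₂ x)) ∂ν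
      = - ∫ x, P (φ₁ x) * ((S₁ x - S₂ x) - (μ₁ x - μ₂ x)) ^ 2 ∂ν) ∧
    (∫ x, P (φ₁ x) * ((S₁ x - S₂ x) - (μ₁ x - μ₂ x))
        * ((μ₁ x - μ₂ x) - (S₁ x - S₂ x)) ∂ν ≤ 0) ∧
    (∫ x, (P (φ₁ x) * (S₁ x - μ₁ x) - P (φ₂ x) * (S₂ x - μ₂ x))
        * ((μ₁ x - μ₂ x) - (S₁ x - S₂ x)) ∂ν
      ≤ L * (eLpNorm (fun x => φ₁ x - φ₂ x) 4 ν).toReal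
          * (eLpNorm (fun x => S₂ x - μ₂ x) 4 ν).toReal
          * (eLpNorm (fun x => (S₁ x - S₂ x) - (μ₁ x - μ₂ x)) 2 ν).toReal) := by
  have h24 : (2:ℝ≥0∞) ≤ 4 := by norm_num
  have h_half : (1:ℝ≥0∞)/2 = 1/4 + 1/4 := by
    rw [ENNReal.div_add_div_same]; rw [ENNReal.div_eq_div_iff] <;> norm_num
  have h_one : (1:ℝ≥0∞)/1 = 1/2 + 1/2 := by
    rw [ENNReal.div_add_div_same]; rw [ENNReal.div_eq_div_iff] <;> norm_num
  have hf2 : MemLp (fun x => (S₁ x - S₂ x) - (μ₁ x - μ₂ x)) 2 ν :=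
    (hS₁.sub (hS₂.mono_exponent h24)).sub
      (hμ₁.sub (hμ₂.mono_exponent h24))
  have hφ4 : MemLp (fun x => φ₁ x - φ₂ x) 4 ν := hφ₁.sub hφ₂
  have hg4 : MemLp (fun x => S₂ x - μ₂ x) 4 ν := hS₂.sub hμ₂
  have hP1m : AEStronglyMeasurable (fun x => P (φ₁ x)) ν :=
    hPLip.continuous.comp_aestronglyMeasurable hφ₁.1
  have hP2m : AEStronglyMeasurable (fun x => P (φ₂ x)) ν :=
    hPLip.continuous.comp_aestronglyMeasurable hφ₂.1
  have hLip' : ∀ a b : ℝ, |P a - P b| ≤ L * |a - b| := by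
    intro a b
    have := hPLip.dist_le_mul a b
    rwa [Real.dist_eq, Real.dist_eq, Real.coe_toNNReal L hL] at this
  -- Part 1
  have hsplit : ∀ x : Ω,
      P (φ₁ x) * (S₁ x - μ₁ x) - P (φ₂ x) * (S₂ x - μ₂ x)
        = P (φ₁ x) * ((S₁ x - S₂ x) - (μ₁ x - μ₂ x))
          + (P (φ₁ x) - P (φ₂ x)) * (S₂ x - μ₂ x) := fun x => by ring
  -- Part 2
  have h2 : ∫ x, P (φ₁ x) * ((S₁ x - S₂ x) - (μ₁ x - μ₂ x))
        * ((μ₁ x - μ₂ x) - (S₁ x - S₂ x)) ∂ν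
      = - ∫ x, P (φ₁ x) * ((S₁ x - S₂ x) - (μ₁ x - μ₂ x)) ^ 2 ∂ν := by
    rw [← integral_neg]
    exact integral_congr_ae (Filter.Eventually.of_forall fun x => by ring)
  -- Part 3
  have h3 : ∫ x, P (φ₁ x) * ((S₁ x - S₂ x) - (μ₁ x - μ₂ x))
        * ((μ₁ x - μ₂ x) - (S₁ x - S₂ x)) ∂ν ≤ 0 := by
    rw [h2, neg_nonpos]
    exact integral_nonneg fun x => mul_nonneg (hPnonneg _) (sq_nonneg _)
  refine ⟨hsplit, h2, h3, ?_⟩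
  -- Part 4
  have hint1 : Integrable (fun x => P (φ₁ x) * ((S₁ x - S₂ x) - (μ₁ x - μ₂ x)) ^ 2) ν :=
    hf2.integrable_sq.bdd_mul hP1m (c := CP) (Filter.Eventually.of_forall fun x => by
      rw [Real.norm_eq_abs, abs_of_nonneg (hPnonneg _)]; exact hPbdd _)
  have hAint : Integrable (fun x => P (φ₁ x) * ((S₁ x - S₂ x) - (μ₁ x - μ₂ x))
      * ((μ₁ x - μ₂ x) - (S₁ x - S₂ x))) ν := by
    have heq : (fun x => P (φ₁ x) * ((S₁ x - S₂ x) - (μ₁ x - μ₂ x))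
        * ((μ₁ x - μ₂ x) - (S₁ x - S₂ x)))
        = fun x => -(P (φ₁ x) * ((S₁ x - S₂ x) - (μ₁ x - μ₂ x)) ^ 2) := by
      funext x; ring
    rw [heq]; exact hint1.neg
  -- the second summand and its dominating function
  have hprod2 : MemLp (fun x => (φ₁ x - φ₂ x) * (S₂ x - μ₂ x)) 2 ν := by
    have := hg4.smul hφ4 (p := 4) (q := 4) (r := 2) (hpqr := ⟨by simpa only [one_div] using h_half.symm⟩)
    simpa [smul_eq_mul, Pi.mul_def] using this
  have hprod1 : MemLp (fun x => (φ₁ x - φ₂ x) * (S₂ x - μ₂ x)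
      * ((S₁ x - S₂ x) - (μ₁ x - μ₂ x))) 1 ν := by
    have := hf2.smul hprod2 (p := 2) (q := 2) (r := 1) (hpqr := ⟨by simpa only [one_div, inv_one] using h_one.symm⟩)
    simp only [smul_eq_mul] at this
    exact this
  have hw : Integrable (fun x => L * ((φ₁ x - φ₂ x) * (S₂ x - μ₂ x)
      * ((S₁ x - S₂ x) - (μ₁ x - μ₂ x)))) ν :=
    (memLp_one_iff_integrable.mp hprod1).const_mul L
  have hu_meas : AEStronglyMeasurable (fun x => (P (φ₁ x) - P (φ₂ x)) * (S₂ x - μ₂ x)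
      * ((μ₁ x - μ₂ x) - (S₁ x - S₂ x))) ν :=
    ((hP1m.sub hP2m).mul hg4.1).mul
      ((hμ₁.sub (hμ₂.mono_exponent h24)).sub
        (hS₁.sub (hS₂.mono_exponent h24))).1
  have hub : ∀ x : Ω, ‖(P (φ₁ x) - P (φ₂ x)) * (S₂ x - μ₂ x)
      * ((μ₁ x - μ₂ x) - (S₁ x - S₂ x))‖
      ≤ ‖L * ((φ₁ x - φ₂ x) * (S₂ x - μ₂ x) * ((S₁ x - S₂ x) - (μ₁ x - μ₂ x)))‖ := by
    intro x
    simp only [Real.norm_eq_abs, abs_mul]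
    rw [abs_of_nonneg hL, abs_sub_comm (μ₁ x - μ₂ x) (S₁ x - S₂ x)]
    exact le_of_le_of_eq
      (mul_le_mul_of_nonneg_right
        (mul_le_mul_of_nonneg_right (hLip' _ _) (abs_nonneg _)) (abs_nonneg _))
      (by ring)
  have hu_int : Integrable (fun x => (P (φ₁ x) - P (φ₂ x)) * (S₂ x - μ₂ x)
      * ((μ₁ x - μ₂ x) - (S₁ x - S₂ x))) ν :=
    Integrable.mono' hw.norm hu_meas (Filter.Eventually.of_forall hub)
  -- bound the second integral
  have hsnorm_u : eLpNorm (fun x => (P (φ₁ x) - P (φ₂ x)) * (S₂ x - μ₂ x)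
      * ((μ₁ x - μ₂ x) - (S₁ x - S₂ x))) 1 ν
      ≤ (L.toNNReal : ℝ≥0∞) * (eLpNorm (fun x => φ₁ x - φ₂ x) 4 ν
          * eLpNorm (fun x => S₂ x - μ₂ x) 4 ν
          * eLpNorm (fun x => (S₁ x - S₂ x) - (μ₁ x - μ₂ x)) 2 ν) := by
    refine (eLpNorm_mono_ae (Filter.Eventually.of_forall hub)).trans ?_
    have hconst : eLpNorm (fun x => L * ((φ₁ x - φ₂ x) * (S₂ x - μ₂ x)
        * ((S₁ x - S₂ x) - (μ₁ x - μ₂ x)))) 1 ν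
        = (‖L‖₊ : ℝ≥0∞) * eLpNorm (fun x => (φ₁ x - φ₂ x) * (S₂ x - μ₂ x)
            * ((S₁ x - S₂ x) - (μ₁ x - μ₂ x))) 1 ν := by
      exact eLpNorm_const_smul L _ 1 ν
    have hLn : ‖L‖₊ = L.toNNReal := by
      ext; simp [Real.coe_toNNReal', Real.norm_eq_abs, abs_of_nonneg hL, max_eq_left hL]
    rw [hconst, hLn]
    refine mul_le_mul_right ?_ _
    have step1 : eLpNorm (fun x => (φ₁ x - φ₂ x) * (S₂ x - μ₂ x)
        * ((S₁ x - S₂ x) - (μ₁ x - μ₂ x))) 1 ν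
        ≤ eLpNorm (fun x => (φ₁ x - φ₂ x) * (S₂ x - μ₂ x)) 2 ν
          * eLpNorm (fun x => (S₁ x - S₂ x) - (μ₁ x - μ₂ x)) 2 ν := by
      have := eLpNorm_smul_le_mul_eLpNorm (f := fun x => (S₁ x - S₂ x) - (μ₁ x - μ₂ x))
        hf2.1 (φ := fun x => (φ₁ x - φ₂ x) * (S₂ x - μ₂ x)) hprod2.1 (p := 2) (q := 2) (r := 1) (hpqr := ⟨by simpa only [one_div, inv_one] using h_one.symm⟩)
      simpa [smul_eq_mul, Pi.mul_def] using this
    have step2 : eLpNorm (fun x => (φ₁ x - φ₂ x) * (S₂ x - μ₂ x)) 2 ν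
        ≤ eLpNorm (fun x => φ₁ x - φ₂ x) 4 ν * eLpNorm (fun x => S₂ x - μ₂ x) 4 ν := by
      have := eLpNorm_smul_le_mul_eLpNorm (f := fun x => S₂ x - μ₂ x)
        hg4.1 (φ := fun x => φ₁ x - φ₂ x) hφ4.1 (p := 4) (q := 4) (r := 2) (hpqr := ⟨by simpa only [one_div] using h_half.symm⟩)
      simpa [smul_eq_mul, Pi.mul_def] using this
    exact step1.trans (mul_le_mul_left step2 _)
  have hbound2 : ∫ x, (P (φ₁ x) - P (φ₂ x)) * (S₂ x - μ₂ x)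
      * ((μ₁ x - μ₂ x) - (S₁ x - S₂ x)) ∂ν
      ≤ L * (eLpNorm (fun x => φ₁ x - φ₂ x) 4 ν).toReal
          * (eLpNorm (fun x => S₂ x - μ₂ x) 4 ν).toReal
          * (eLpNorm (fun x => (S₁ x - S₂ x) - (μ₁ x - μ₂ x)) 2 ν).toReal := by
    have hstep : ∫ x, (P (φ₁ x) - P (φ₂ x)) * (S₂ x - μ₂ x)
        * ((μ₁ x - μ₂ x) - (S₁ x - S₂ x)) ∂ν
        ≤ (eLpNorm (fun x => (P (φ₁ x) - P (φ₂ x)) * (S₂ x - μ₂ x)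
            * ((μ₁ x - μ₂ x) - (S₁ x - S₂ x))) 1 ν).toReal := by
      have h1 : ∫ x, (P (φ₁ x) - P (φ₂ x)) * (S₂ x - μ₂ x)
          * ((μ₁ x - μ₂ x) - (S₁ x - S₂ x)) ∂ν
          ≤ ∫ x, ‖(P (φ₁ x) - P (φ₂ x)) * (S₂ x - μ₂ x)
            * ((μ₁ x - μ₂ x) - (S₁ x - S₂ x))‖ ∂ν :=
        integral_mono hu_int hu_int.norm fun x => le_abs_self _
      rw [integral_norm_eq_lintegral_enorm hu_meas, ← eLpNorm_one_eq_lintegral_enorm] at h1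
      exact h1
    refine hstep.trans ?_
    have hfin : ((L.toNNReal : ℝ≥0∞) * (eLpNorm (fun x => φ₁ x - φ₂ x) 4 ν
        * eLpNorm (fun x => S₂ x - μ₂ x) 4 ν
        * eLpNorm (fun x => (S₁ x - S₂ x) - (μ₁ x - μ₂ x)) 2 ν)) ≠ ⊤ := by
      refine ENNReal.mul_ne_top ENNReal.coe_ne_top ?_
      exact ENNReal.mul_ne_top
        (ENNReal.mul_ne_top hφ4.eLpNorm_lt_top.ne hg4.eLpNorm_lt_top.ne)
        hf2.eLpNorm_lt_top.ne
    have := ENNReal.toReal_mono hfin hsnorm_u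
    refine this.trans_eq ?_
    rw [ENNReal.toReal_mul, ENNReal.toReal_mul, ENNReal.toReal_mul,
      ENNReal.coe_toReal, Real.coe_toNNReal L hL]
    ring
  -- assemble
  have h4eq : ∫ x, (P (φ₁ x) * (S₁ x - μ₁ x) - P (φ₂ x) * (S₂ x - μ₂ x))
      * ((μ₁ x - μ₂ x) - (S₁ x - S₂ x)) ∂ν
      = (∫ x, P (φ₁ x) * ((S₁ x - S₂ x) - (μ₁ x - μ₂ x))
          * ((μ₁ x - μ₂ x) - (S₁ x - S₂ x)) ∂ν)
        + ∫ x, (P (φ₁ x) - P (φ₂ x)) * (S₂ x - μ₂ x)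
          * ((μ₁ x - μ₂ x) - (S₁ x - S₂ x)) ∂ν := by
    rw [← integral_add hAint hu_int]
    exact integral_congr_ae (Filter.Eventually.of_forall fun x => by dsimp only; rw [hsplit x]; ring)
  rw [h4eq]
  calc _ ≤ (0:ℝ) + (L * (eLpNorm (fun x => φ₁ x - φ₂ x) 4 ν).toReal
          * (eLpNorm (fun x => S₂ x - μ₂ x) 4 ν).toReal
          * (eLpNorm (fun x => (S₁ x - S₂ x) - (μ₁ x - μ₂ x)) 2 ν).toReal) :=
        add_le_add h3 hbound2
    _ = _ := by ring
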